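/- The diagram of measure maps commutes: for every probability measure μ on {0,1}^ℤ, the pushforward under φ of μF_A equals (φ_*μ)F_B, i.e. φ_*(μ F_A) = (φ_*μ) F_B. (Lemma 4.1, measure version.) -/

import Mathlib

open MeasureTheory ProbabilityTheory

/-!
Conventions: a configuration of model A is `x : ℤ → Bool` (`false` = 0, `true` = 1);
a configuration of model B is `y : ℤ → Bool` (`false` = ∘, `true` = •);
an update configuration is `u : ℤ → Bool` (`true` = ↑, `false` = →).
The spaces `ℤ → Bool` carry the product σ-algebra.
-/

/-- The local map `𝒜` of model A. -/
def modelA (x u : ℤ → Bool) : ℤ → Bool := fun i =>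
  if x (i - 1) = x i then xor (x i) (u i) else x (i - 1)

/-- The local map `ℬ` of model B: the `i`-th coordinate of `ℬ(y,u)` is `•` iff
`(y_{i-1}y_i, u_{i-1}u_i) ∈ {(•∘, →⋅), (∘•, ⋅↑), (••, ↑↑), (••, →→)}`. -/
def modelB (y u : ℤ → Bool) : ℤ → Bool := fun i =>
  match y (i - 1), y i with
  | true, false => !u (i - 1)
  | false, true => u i
  | true, true => u (i - 1) == u i
  | false, false => false

/-- The map `φ`: the `i`-th coordinate of `φ(x)` is `•` iff `x_i x_{i+1} ∈ {00,11}`. -/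
def phi (x : ℤ → Bool) : ℤ → Bool := fun i => x i == x (i + 1)

/-- `lam` is the product over `ℤ` of the uniform measure on the two-element update
alphabet `𝒰`: it is a probability measure giving each cylinder prescribing the values
on a finite set `s` of coordinates the measure `(1/2)^|s|`. -/
def IsUniformProduct (lam : Measure (ℤ → Bool)) : Prop :=
  IsProbabilityMeasure lam ∧
    ∀ (s : Finset ℤ) (f : ℤ → Bool),
      lam {u | ∀ i ∈ s, u i = f i} = (1 / 2 : ENNReal) ^ s.card

/-- `μ F_A`: the pushforward of `μ ⊗ lam` under `𝒜`. -/
noncomputable def FA (lam μ : Measure (ℤ → Bool)) : Measure (ℤ → Bool) :=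
  Measure.map (fun p : (ℤ → Bool) × (ℤ → Bool) => modelA p.1 p.2) (μ.prod lam)

/-- `ν F_B`: the pushforward of `ν ⊗ lam` under `ℬ`. -/
noncomputable def FB (lam ν : Measure (ℤ → Bool)) : Measure (ℤ → Bool) :=
  Measure.map (fun p : (ℤ → Bool) × (ℤ → Bool) => modelB p.1 p.2) (ν.prod lam)

/-!
The map `φ` intertwines the two dynamics pathwise, `φ (𝒜 (x, u)) = ℬ (φ x, σ u)`, where `σ` shifts
the update configuration one step to the left. The uniform product measure `λ` is shift invariant,
so pushing `μ ⊗ λ` forward along `(x, u) ↦ (φ x, σ u)` gives `φ_* μ ⊗ λ`; applying `ℬ` to both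
sides yields the claim.
-/

open Set Function MeasurableSpace

section SingletonCylinders

variable {ι α : Type*}

def singletonCylinders (ι α : Type*) : Set (Set (ι → α)) :=
  {S | ∃ (s : Finset ι) (f : ι → α), S = (s : Set ι).pi fun i => {f i}}

theorem isPiSystem_singletonCylinders : IsPiSystem (singletonCylinders ι α) := by
  classical
  rintro _ ⟨s, f, rfl⟩ _ ⟨t, g, rfl⟩ ⟨w, hws, hwt⟩
  refine ⟨s ∪ t, w, ?_⟩
  ext u
  simp only [mem_inter_iff, mem_pi, mem_singleton_iff, Finset.coe_union, mem_union]
  grind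

variable [MeasurableSpace α]

theorem generateFrom_singletonCylinders [Countable α] [MeasurableSingletonClass α] :
    generateFrom (singletonCylinders ι α) = MeasurableSpace.pi := by
  refine le_antisymm (generateFrom_le ?_) (iSup_le fun i => ?_)
  · rintro _ ⟨s, f, rfl⟩
    exact .pi s.countable_toSet fun i _ => measurableSet_singleton (f i)
  · refine comap_le_iff_le_map.2 fun (T : Set α) _ => ?_
    have hT : eval i ⁻¹' T = ⋃ a ∈ T, (({i} : Finset ι) : Set ι).pi fun _ => {a} := by
      ext u
      simp
    change MeasurableSet[generateFrom _] ((eval i : (ι → α) → α) ⁻¹' T)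
    rw [hT]
    exact .biUnion T.to_countable fun a _ => measurableSet_generateFrom ⟨{i}, fun _ => a, rfl⟩

theorem Measure.ext_of_singletonCylinders [Countable α] [MeasurableSingletonClass α]
    {μ ν : Measure (ι → α)} [IsFiniteMeasure μ]
    (h : ∀ (s : Finset ι) (f : ι → α),
      μ ((s : Set ι).pi fun i => {f i}) = ν ((s : Set ι).pi fun i => {f i})) : μ = ν := by
  refine ext_of_generate_finite _ generateFrom_singletonCylinders.symm
    isPiSystem_singletonCylinders ?_ ?_
  · rintro _ ⟨s, f, rfl⟩
    exact h s f
  · rcases isEmpty_or_nonempty (ι → α) with _ | ⟨⟨f⟩⟩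
    · simp [univ_eq_empty_iff.2 ‹_›]
    · simpa using h ∅ f

end SingletonCylinders

namespace IsUniformProduct

variable {lam : Measure (ℤ → Bool)}

theorem unique {lam' : Measure (ℤ → Bool)} (hlam : IsUniformProduct lam)
    (hlam' : IsUniformProduct lam') : lam = lam' :=
  have := hlam.1
  Measure.ext_of_singletonCylinders fun s f => (hlam.2 s f).trans (hlam'.2 s f).symm

theorem map_comp_equiv (hlam : IsUniformProduct lam) (e : ℤ ≃ ℤ) :
    IsUniformProduct (lam.map (· ∘ e)) := by
  have he : Measurable fun u : ℤ → Bool => u ∘ e := by fun_prop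
  have := hlam.1
  refine ⟨Measure.isProbabilityMeasure_map he.aemeasurable, fun s f => ?_⟩
  have hcyl : MeasurableSet {u : ℤ → Bool | ∀ i ∈ s, u i = f i} :=
    .pi s.countable_toSet fun i _ => measurableSet_singleton (f i)
  have hpre : (· ∘ e) ⁻¹' {u : ℤ → Bool | ∀ i ∈ s, u i = f i} =
      {u | ∀ j ∈ s.map e.toEmbedding, u j = f (e.symm j)} := by
    ext u
    simp only [mem_preimage, mem_ofPred_eq, comp_apply, Finset.forall_mem_map,
      Equiv.coe_toEmbedding, Equiv.symm_apply_apply]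
  rw [Measure.map_apply he hcyl, hpre, hlam.2, Finset.card_map]

theorem map_comp_equiv_eq (hlam : IsUniformProduct lam) (e : ℤ ≃ ℤ) :
    lam.map (· ∘ e) = lam :=
  (hlam.map_comp_equiv e).unique hlam

end IsUniformProduct

theorem measurable_modelA : Measurable fun p : (ℤ → Bool) × (ℤ → Bool) => modelA p.1 p.2 :=
  measurable_pi_iff.2 fun _ =>
    .ite (measurableSet_eq_fun (by fun_prop) (by fun_prop)) (by fun_prop) (by fun_prop)

theorem measurable_modelB : Measurable fun p : (ℤ → Bool) × (ℤ → Bool) => modelB p.1 p.2 :=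
  measurable_pi_iff.2 fun _ => by unfold modelB; measurability

theorem measurable_phi : Measurable phi :=
  measurable_pi_iff.2 fun _ => by unfold phi; fun_prop

theorem phi_modelA (x u : ℤ → Bool) :
    phi (modelA x u) = modelB (phi x) (u ∘ Equiv.addRight 1) := by
  funext i
  simp only [phi, modelA, modelB, comp_apply, Equiv.coe_addRight, sub_add_cancel,
    add_sub_cancel_right]
  cases x (i - 1) <;> cases x i <;> cases x (i + 1) <;> cases u i <;> cases u (i + 1) <;> rfl

theorem map_phi_FA_eq_FB_map_phi (lam : Measure (ℤ → Bool))
    (hlam : IsUniformProduct lam) (μ : Measure (ℤ → Bool)) [IsProbabilityMeasure μ] :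
    Measure.map phi (FA lam μ) = FB lam (Measure.map phi μ) := by
  have := hlam.1
  have hshift : Measurable fun u : ℤ → Bool => u ∘ Equiv.addRight 1 := by fun_prop
  have hcomm : (phi ∘ fun p : (ℤ → Bool) × (ℤ → Bool) => modelA p.1 p.2) =
      (fun p => modelB p.1 p.2) ∘ Prod.map phi (· ∘ Equiv.addRight 1) :=
    funext fun p => phi_modelA p.1 p.2
  rw [FA, FB, Measure.map_map measurable_phi measurable_modelA, hcomm,
    ← Measure.map_map measurable_modelB (measurable_phi.prodMap hshift),
    ← Measure.map_prod_map _ _ measurable_phi hshift, hlam.map_comp_equiv_eq]
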